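/- arXiv:2011.05644 — 5 statements merged into one kernel-verified Lean document; each statement's English description precedes it below -/
import Mathlib

section
/- Let (U,d) be a bounded metric space and (E,‖·‖) a Banach algebra. Suppose f_0,...,f_n, h_0,...,h_n : U → E satisfy ‖f_k(x)‖ ≤ c₁(k)‖h_k(x)‖ for all x ∈ U and ‖f_k(x) − f_k(y)‖ ≤ c₂(k)‖h_k(x)‖ d(x,y) for all x,y ∈ U, with positive constants c₁(k), c₂(k). Then ‖∏_{k=0}^n f_k(x) − ∏_{k=0}^n f_k(y)‖ ≤ C · (∏_{i=0}^n ‖h_i(x)‖) · d(x,y) for all x,y ∈ U, where C = Σ_{i=0}^n (∏_{j=0}^{i-1} c₁(j)) c₂(i) (∏_{j=i+1}^n (c₁(j) + c₂(j)·diam U)). -/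
/-!
The noncommutative telescoping identity
`∏ a - ∏ b = ∑ i, a₀ ⋯ aᵢ₋₁ (aᵢ - bᵢ) bᵢ₊₁ ⋯ bₙ`, applied with `a k = f k x` and `b k = f k y`,
bounds the difference by `∑ i, ∏_{j<i} ‖f j x‖ · ‖f i x - f i y‖ · ∏_{j>i} ‖f j y‖`.
Every factor is controlled by `‖h j x‖`; for the trailing ones this uses
`‖f j y‖ ≤ ‖f j x‖ + ‖f j x - f j y‖ ≤ (c₁ j + c₂ j · diam U) ‖h j x‖`.
-/

open Finset

namespace Fin

variable {M : Type*} [CommMonoid M] {n : ℕ}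

theorem prod_filter_lt_zero (g : Fin (n + 1) → M) :
    ∏ j ∈ univ.filter (· < (0 : Fin (n + 1))), g j = 1 := by
  simp

theorem prod_filter_zero_lt (g : Fin (n + 1) → M) :
    ∏ j ∈ univ.filter ((0 : Fin (n + 1)) < ·), g j = ∏ j : Fin n, g j.succ := by
  rw [filter_lt_eq_Ioi, Fin.prod_Ioi_zero]

theorem prod_filter_lt_succ (g : Fin (n + 2) → M) (i : Fin (n + 1)) :
    ∏ j ∈ univ.filter (· < i.succ), g j = g 0 * ∏ j ∈ univ.filter (· < i), g j.succ := by
  simp [prod_filter, Fin.prod_univ_succ, Fin.succ_pos]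

theorem prod_filter_succ_lt (g : Fin (n + 2) → M) (i : Fin (n + 1)) :
    ∏ j ∈ univ.filter (i.succ < ·), g j = ∏ j ∈ univ.filter (i < ·), g j.succ := by
  simp [prod_filter, Fin.prod_univ_succ]

end Fin

theorem Finset.prod_filter_lt_mul_mul_prod_filter_gt {ι M : Type*} [Fintype ι] [LinearOrder ι]
    [CommMonoid M] (g : ι → M) (i : ι) :
    (∏ j ∈ univ.filter (· < i), g j) * g i * ∏ j ∈ univ.filter (i < ·), g j = ∏ j, g j := by
  rw [mul_assoc, ← prod_filter_mul_prod_filter_not univ (· < i)]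
  congr 1
  have : univ.filter (fun j => ¬ j < i) = insert i (univ.filter (i < ·)) := by
    ext j; simp [le_iff_eq_or_lt, eq_comm]
  rw [this, prod_insert (by simp)]

section Telescoping

variable {E : Type*} [SeminormedRing E]

theorem norm_prod_ofFn_le {n : ℕ} (a : Fin (n + 1) → E) (α : Fin (n + 1) → ℝ)
    (ha : ∀ k, ‖a k‖ ≤ α k) : ‖(List.ofFn a).prod‖ ≤ ∏ k, α k :=
  calc ‖(List.ofFn a).prod‖ ≤ ((List.ofFn a).map norm).prod :=
        List.norm_prod_le' (by simp)
    _ = ∏ k, ‖a k‖ := by rw [List.map_ofFn, List.prod_ofFn]; rfl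
    _ ≤ ∏ k, α k := prod_le_prod (fun k _ => norm_nonneg _) (fun k _ => ha k)

theorem norm_prod_ofFn_sub_prod_ofFn_le :
    ∀ {n : ℕ} (a b : Fin (n + 1) → E) (α β δ : Fin (n + 1) → ℝ),
      (∀ k, ‖a k‖ ≤ α k) → (∀ k, ‖b k‖ ≤ β k) → (∀ k, ‖a k - b k‖ ≤ δ k) →
      ‖(List.ofFn a).prod - (List.ofFn b).prod‖ ≤
        ∑ i, (∏ j ∈ univ.filter (· < i), α j) * δ i * ∏ j ∈ univ.filter (i < ·), β j
  | 0, a, b, α, β, δ, _, _, hab => by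
    rw [Fin.sum_univ_one, Fin.prod_filter_lt_zero, Fin.prod_filter_zero_lt]
    simpa using hab 0
  | n + 1, a, b, α, β, δ, ha, hb, hab => by
    set a' : Fin (n + 1) → E := fun k => a k.succ
    set b' : Fin (n + 1) → E := fun k => b k.succ
    have head_tail : (List.ofFn a).prod - (List.ofFn b).prod =
        (a 0 - b 0) * (List.ofFn b').prod
          + a 0 * ((List.ofFn a').prod - (List.ofFn b').prod) := by
      simp only [List.ofFn_succ, List.prod_cons, a', b']
      noncomm_ring
    have tail_b := norm_prod_ofFn_le b' (fun k => β k.succ) (fun k => hb k.succ)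
    have tail_diff := norm_prod_ofFn_sub_prod_ofFn_le a' b' (fun k => α k.succ)
      (fun k => β k.succ) (fun k => δ k.succ) (fun k => ha k.succ) (fun k => hb k.succ)
      (fun k => hab k.succ)
    rw [head_tail, Fin.sum_univ_succ]
    simp only [Fin.prod_filter_lt_zero, Fin.prod_filter_zero_lt, Fin.prod_filter_lt_succ,
      Fin.prod_filter_succ_lt, one_mul]
    calc _ ≤ ‖a 0 - b 0‖ * ‖(List.ofFn b').prod‖
            + ‖a 0‖ * ‖(List.ofFn a').prod - (List.ofFn b').prod‖ :=
          (norm_add_le _ _).trans (add_le_add (norm_mul_le _ _) (norm_mul_le _ _))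
      _ ≤ δ 0 * ∏ j : Fin (n + 1), β j.succ + α 0 * ∑ i : Fin (n + 1),
            (∏ j ∈ univ.filter (· < i), α j.succ) * δ i.succ *
              ∏ j ∈ univ.filter (i < ·), β j.succ :=
          add_le_add (mul_le_mul (hab 0) tail_b (norm_nonneg _) ((norm_nonneg _).trans (hab 0)))
            (mul_le_mul (ha 0) tail_diff (norm_nonneg _) ((norm_nonneg _).trans (ha 0)))
      _ = _ := by rw [mul_sum]; simp only [mul_assoc]

end Telescoping

theorem prod_lipschitz_estimate_general
    {U : Type*} [MetricSpace U] {E : Type*} [NormedRing E]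
    (hU : Bornology.IsBounded (Set.univ : Set U)) (n : ℕ)
    (f h : Fin (n + 1) → U → E) (c₁ c₂ : Fin (n + 1) → ℝ)
    (hc₂ : ∀ k, 0 < c₂ k)
    (hf : ∀ k x, ‖f k x‖ ≤ c₁ k * ‖h k x‖)
    (hlip : ∀ k x y, ‖f k x - f k y‖ ≤ c₂ k * ‖h k x‖ * dist x y) :
    ∀ x y : U,
      ‖(List.ofFn fun k => f k x).prod - (List.ofFn fun k => f k y).prod‖ ≤
        (∑ i : Fin (n + 1),
            (∏ j ∈ Finset.univ.filter (fun j => j < i), c₁ j) * c₂ i *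
              (∏ j ∈ Finset.univ.filter (fun j => i < j),
                (c₁ j + c₂ j * Metric.diam (Set.univ : Set U)))) *
          (∏ i : Fin (n + 1), ‖h i x‖) * dist x y := by
  intro x y
  set D := Metric.diam (Set.univ : Set U)
  have hxy : dist x y ≤ D := Metric.dist_le_diam_of_mem hU trivial trivial
  have hfy (k : Fin (n + 1)) : ‖f k y‖ ≤ (c₁ k + c₂ k * D) * ‖h k x‖ :=
    calc ‖f k y‖ ≤ ‖f k x‖ + ‖f k x - f k y‖ := norm_le_norm_add_norm_sub _ _
      _ ≤ c₁ k * ‖h k x‖ + c₂ k * ‖h k x‖ * D :=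
          add_le_add (hf k x) ((hlip k x y).trans
            (mul_le_mul_of_nonneg_left hxy (mul_nonneg (hc₂ k).le (norm_nonneg _))))
      _ = (c₁ k + c₂ k * D) * ‖h k x‖ := by ring
  refine (norm_prod_ofFn_sub_prod_ofFn_le _ _ _ _ _ (fun k => hf k x) hfy
    (fun k => hlip k x y)).trans_eq ?_
  rw [sum_mul, sum_mul]
  refine sum_congr rfl fun i _ => ?_
  rw [← prod_filter_lt_mul_mul_prod_filter_gt (fun j => ‖h j x‖) i]
  simp only [prod_mul_distrib]
  ring

/-- product Lipschitz estimate in a Banach algebra. -/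
theorem prod_lipschitz_estimate
    {U : Type*} [MetricSpace U] {E : Type*} [NormedRing E] [CompleteSpace E]
    (hU : Bornology.IsBounded (Set.univ : Set U)) (n : ℕ)
    (f h : Fin (n + 1) → U → E) (c₁ c₂ : Fin (n + 1) → ℝ)
    (hc₁ : ∀ k, 0 < c₁ k) (hc₂ : ∀ k, 0 < c₂ k)
    (hf : ∀ k x, ‖f k x‖ ≤ c₁ k * ‖h k x‖)
    (hlip : ∀ k x y, ‖f k x - f k y‖ ≤ c₂ k * ‖h k x‖ * dist x y) :
    ∀ x y : U,
      ‖(List.ofFn fun k => f k x).prod - (List.ofFn fun k => f k y).prod‖ ≤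
        (∑ i : Fin (n + 1),
            (∏ j ∈ Finset.univ.filter (fun j => j < i), c₁ j) * c₂ i *
              (∏ j ∈ Finset.univ.filter (fun j => i < j),
                (c₁ j + c₂ j * Metric.diam (Set.univ : Set U)))) *
          (∏ i : Fin (n + 1), ‖h i x‖) * dist x y :=
  prod_lipschitz_estimate_general hU n f h c₁ c₂ hc₂ hf hlip
end

section
/- Fix an integer n ≥ 2 and s ∈ (0,1). There exist positive continuous functions L(n,s) and M(n,s) ∈ (0,1) such that for all a, x > 0 with a/x ≤ M(n,s), any intermediate point α ∈ [0,1] satisfying (a+x)^s = Σ_{k=0}^{n−1} C(s,k) a^{s−k} x^k + C(s,n)(a + αx)^{s−n} x^n (where C(s,k) denotes the generalized binomial coefficient s(s−1)⋯(s−k+1)/k!) satisfies α ≥ (a/x)^{(n−1−s)/(n−s)} · L(n,s). One may take L(n,s) = (1/2)(|C(s,n)|/(|C(s,n−1)|+1))^{1/(n−s)} and M(n,s) = min(1, c^{−1/(1−s)}, (1/2)^{n−s}|C(s,n)|/(|C(s,n−1)|+1)) with c = 2^s + Σ_{k=0}^{n−2}|C(s,k)|. -/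
/-!
With `r = a / x`, dividing the expansion by `x ^ s` gives
`(r + 1) ^ s = ∑_{k<n} C(s,k) r ^ (s - k) + C(s,n) (r + α) ^ (s - n)`.
For `r ≤ 1`, the left side and the terms with `k ≤ n - 2` add up to at most `c r ^ (2 - n)`,
where `c = 2 ^ s + ∑_{k≤n-2} |C(s,k)|`, and the smallness condition `c ≤ r ^ (s - 1)` turns this
into `r ^ (s - n + 1)`, the size of the `(n-1)`-st term. Hence
`|C(s,n)| (r + α) ^ (s - n) ≤ (|C(s,n-1)| + 1) r ^ (s - n + 1)`, a lower bound for `r + α` of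
order `r ^ ((n - 1 - s)/(n - s))`; the last smallness condition makes `r` at most half of it.
-/

/-- Generalized binomial coefficient `s(s-1)⋯(s-k+1)/k!`. -/
noncomputable def genBinom (s : ℝ) (k : ℕ) : ℝ :=
  (∏ i ∈ Finset.range k, (s - i)) / (Nat.factorial k)

open Finset Real

lemma rpow_sub_natCast_mul_pow {y x : ℝ} (hy : 0 ≤ y) (hx : 0 < x) (s : ℝ) (k : ℕ) :
    y ^ (s - k) * x ^ k = x ^ s * (y / x) ^ (s - k) := by
  rw [div_rpow hy hx.le, rpow_sub hx, ← rpow_natCast]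
  field_simp

lemma rpow_expansion_div {b : ℕ → ℝ} {n : ℕ} {s a x α : ℝ} (ha : 0 ≤ a) (hx : 0 < x)
    (hα : 0 ≤ α)
    (h : (a + x) ^ s = ∑ k ∈ range n, b k * a ^ (s - k) * x ^ k +
      b n * (a + α * x) ^ (s - n) * x ^ n) :
    (a / x + 1) ^ s =
      ∑ k ∈ range n, b k * (a / x) ^ (s - k) + b n * (a / x + α) ^ (s - n) := by
  have hlhs : (a + x) ^ s = x ^ s * (a / x + 1) ^ s := by
    simpa [add_div, hx.ne'] using rpow_sub_natCast_mul_pow (by positivity : 0 ≤ a + x) hx s 0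
  have hrem : (a + α * x) ^ (s - n) * x ^ n = x ^ s * (a / x + α) ^ (s - n) := by
    rw [rpow_sub_natCast_mul_pow (by positivity) hx, add_div, mul_div_cancel_right₀ _ hx.ne']
  simp only [mul_assoc, rpow_sub_natCast_mul_pow ha hx, hlhs, hrem] at h
  refine mul_left_cancel₀ (rpow_pos_of_pos hx s).ne' ?_
  rw [h, mul_add, mul_sum]
  congr 1
  · exact sum_congr rfl fun k _ => by ring
  · ring

lemma add_sum_abs_mul_rpow_le {b : ℕ → ℝ} {n : ℕ} (hn : 2 ≤ n) {s r : ℝ} (hs : 0 ≤ s)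
    (hr0 : 0 < r) (hr1 : r ≤ 1) :
    (r + 1) ^ s + ∑ k ∈ range (n - 1), |b k| * r ^ (s - k) ≤
      (2 ^ s + ∑ k ∈ range (n - 1), |b k|) * r ^ (2 - (n : ℝ)) := by
  have hn' : (2 : ℝ) ≤ n := by exact_mod_cast hn
  have hfirst : (r + 1) ^ s ≤ 2 ^ s * r ^ (2 - (n : ℝ)) :=
    calc (r + 1) ^ s ≤ 2 ^ s := rpow_le_rpow (by positivity) (by linarith) hs
      _ ≤ 2 ^ s * r ^ (2 - (n : ℝ)) := le_mul_of_one_le_right (by positivity)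
          (one_le_rpow_of_pos_of_le_one_of_nonpos hr0 hr1 (by linarith))
  have hterm : ∀ k ∈ range (n - 1), |b k| * r ^ (s - k) ≤ |b k| * r ^ (2 - (n : ℝ)) := by
    intro k hk
    have : (k : ℝ) + 2 ≤ n := by
      have := mem_range.1 hk
      exact_mod_cast (by omega : k + 2 ≤ n)
    exact mul_le_mul_of_nonneg_left (rpow_le_rpow_of_exponent_ge hr0 hr1 (by linarith))
      (abs_nonneg _)
  rw [add_mul, sum_mul]
  exact add_le_add hfirst (sum_le_sum hterm)

lemma abs_remainder_le_of_rpow_expansion {b : ℕ → ℝ} {n : ℕ} (hn : 2 ≤ n) {s r v : ℝ}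
    (hs : 0 ≤ s) (hr0 : 0 < r) (hr1 : r ≤ 1)
    (hc : 2 ^ s + ∑ k ∈ range (n - 1), |b k| ≤ r ^ (s - 1))
    (h : (r + 1) ^ s = ∑ k ∈ range n, b k * r ^ (s - k) + b n * v) :
    |b n * v| ≤ (|b (n - 1)| + 1) * r ^ (s - (n - 1)) := by
  obtain ⟨m, rfl⟩ : ∃ m, n = m + 1 := ⟨n - 1, by omega⟩
  simp only [add_tsub_cancel_right, sum_range_succ, Nat.cast_add, Nat.cast_one] at h hc ⊢
  have hlow : (r + 1) ^ s + ∑ k ∈ range m, |b k| * r ^ (s - k) ≤ r ^ (s - m) :=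
    calc _ ≤ (2 ^ s + ∑ k ∈ range m, |b k|) * r ^ (2 - ((m + 1 : ℕ) : ℝ)) :=
          add_sum_abs_mul_rpow_le hn hs hr0 hr1
      _ ≤ r ^ (s - 1) * r ^ (2 - ((m + 1 : ℕ) : ℝ)) := by gcongr
      _ = r ^ (s - m) := by rw [← rpow_add hr0]; push_cast; ring_nf
  have hsum : |∑ k ∈ range m, b k * r ^ (s - k)| ≤ ∑ k ∈ range m, |b k| * r ^ (s - k) :=
    (abs_sum_le_sum_abs _ _).trans_eq <| sum_congr rfl fun k _ => by
      rw [abs_mul, abs_of_pos (rpow_pos_of_pos hr0 _)]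
  have hlast : |b m * r ^ (s - m)| = |b m| * r ^ (s - m) := by
    rw [abs_mul, abs_of_pos (rpow_pos_of_pos hr0 _)]
  have hv : b (m + 1) * v =
      (r + 1) ^ s - ∑ k ∈ range m, b k * r ^ (s - k) - b m * r ^ (s - m) := by
    rw [h]; ring
  rw [hv]
  calc _ ≤ |(r + 1) ^ s| + |∑ k ∈ range m, b k * r ^ (s - k)| + |b m * r ^ (s - m)| :=
        (abs_sub _ _).trans (add_le_add_left (abs_sub _ _) _)
    _ ≤ (r + 1) ^ s + ∑ k ∈ range m, |b k| * r ^ (s - k) + |b m| * r ^ (s - m) := by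
        rw [abs_of_pos (by positivity), hlast]; gcongr
    _ ≤ _ := by linarith

lemma div_rpow_mul_rpow_le {C D r u p q : ℝ} (hC : 0 ≤ C) (hD : 0 < D) (hr : 0 < r)
    (hu : 0 < u) (hp : 0 < p) (h : C * u ^ (-p) ≤ D * r ^ (-q)) :
    r ^ (q / p) * (C / D) ^ (1 / p) ≤ u := by
  have hpow : r ^ q * (C / D) ≤ u ^ p := by
    calc r ^ q * (C / D) = C * u ^ (-p) * (r ^ q * u ^ p / D) := by
          rw [rpow_neg hu.le]; field_simp
      _ ≤ D * r ^ (-q) * (r ^ q * u ^ p / D) := by gcongr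
      _ = u ^ p := by rw [rpow_neg hr.le]; field_simp
  rw [div_eq_mul_one_div q, rpow_mul hr.le, ← mul_rpow (by positivity) (by positivity),
    one_div, rpow_inv_le_iff_of_pos (by positivity) hu.le hp]
  exact hpow

lemma le_rpow_mul_of_le_rpow_mul {r t K p q : ℝ} (hr : 0 ≤ r) (ht : 0 ≤ t) (hK : 0 ≤ K)
    (hp : 0 < p) (hqp : q + 1 = p) (h : r ≤ t ^ p * K) :
    r ≤ r ^ (q / p) * (t * K ^ (1 / p)) := by
  have hroot : r ^ (1 / p) ≤ t * K ^ (1 / p) := by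
    calc r ^ (1 / p) ≤ (t ^ p * K) ^ (1 / p) := by gcongr
      _ = t * K ^ (1 / p) := by
        rw [mul_rpow (by positivity) hK, ← rpow_mul ht, mul_one_div_cancel hp.ne', rpow_one]
  have hsum : q / p + 1 / p = 1 := by rw [← add_div, hqp, div_self hp.ne']
  calc r = r ^ (q / p) * r ^ (1 / p) := by
        rw [← rpow_add' hr (by rw [hsum]; exact one_ne_zero), hsum, rpow_one]
    _ ≤ r ^ (q / p) * (t * K ^ (1 / p)) := by gcongr

/-- lower bound on the intermediate point in the `n`-th order
Taylor expansion of `(a + x) ^ s`, for `n ≥ 2`. -/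
theorem intermediate_point_lower_bound_higher_order
    (n : ℕ) (hn : 2 ≤ n) (s : ℝ) (hs : s ∈ Set.Ioo (0 : ℝ) 1)
    (a x : ℝ) (ha : 0 < a) (hx : 0 < x)
    (hM : a / x ≤
      min 1 (min ((2 ^ s + ∑ k ∈ Finset.range (n - 1), |genBinom s k|) ^ (-(1 : ℝ) / (1 - s)))
        (((1 : ℝ) / 2) ^ ((n : ℝ) - s) * |genBinom s n| / (|genBinom s (n - 1)| + 1))))
    (α : ℝ) (hα : α ∈ Set.Icc (0 : ℝ) 1)
    (heq : (a + x) ^ s =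
      (∑ k ∈ Finset.range n, genBinom s k * a ^ (s - k) * x ^ k) +
        genBinom s n * (a + α * x) ^ (s - n) * x ^ n) :
    (a / x) ^ (((n : ℝ) - 1 - s) / ((n : ℝ) - s)) *
        ((1 : ℝ) / 2 * (|genBinom s n| / (|genBinom s (n - 1)| + 1)) ^ ((1 : ℝ) / ((n : ℝ) - s)))
      ≤ α := by
  obtain ⟨hs0, hs1⟩ := hs
  set r := a / x
  have hr0 : 0 < r := div_pos ha hx
  have hu : 0 < r + α := by linarith [hα.1]
  have hp : 0 < (n : ℝ) - s := by linarith [show (2 : ℝ) ≤ n by exact_mod_cast hn]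
  obtain ⟨hr1, hr_c, hr_K⟩ := by simpa only [le_min_iff] using hM
  have hc : 2 ^ s + ∑ k ∈ range (n - 1), |genBinom s k| ≤ r ^ (s - 1) := by
    rw [← le_rpow_inv_iff_of_neg hr0 (by positivity) (by linarith)]
    rwa [show (s - 1)⁻¹ = -1 / (1 - s) by rw [neg_div, ← div_neg, neg_sub, one_div]]
  have hrem := abs_remainder_le_of_rpow_expansion hn hs0.le hr0 hr1 hc
    (rpow_expansion_div ha.le hx hα.1 heq)
  rw [abs_mul, abs_of_pos (rpow_pos_of_pos hu _)] at hrem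
  have hlower := div_rpow_mul_rpow_le (D := |genBinom s (n - 1)| + 1) (q := n - 1 - s)
    (abs_nonneg _) (by positivity) hr0 hu hp (by convert hrem using 3 <;> ring)
  have hsmall := le_rpow_mul_of_le_rpow_mul (t := 1 / 2)
    (K := |genBinom s n| / (|genBinom s (n - 1)| + 1)) (q := n - 1 - s) hr0.le (by norm_num)
    (by positivity) hp (by ring) (by rwa [mul_div_assoc] at hr_K)
  linarith
end

section
/- Let g : X → ℝ with 0 < |g| ≤ 1 everywhere, and for k = 1,…,n let g_k : X → ℝ satisfy |g_k(ω)| ≤ c₄ |g(ω)|^{t_k} with t_k ∈ (0,1]. For integers 0 ≤ l ≤ k ≤ n define G^p_{l,k}(ω) = (|g(ω)|^p / g(ω)^l) Σ l!/(j₁!⋯j_k!) g₁(ω)^{j₁}⋯g_k(ω)^{j_k}, summed over j₁,…,j_k ≥ 0 with j₁+⋯+j_k = l and j₁+2j₂+⋯+kj_k = k (and G^p_{0,0} = |g|^p). If p_k := p̲ + (n/k)(1 − t_k) ≤ p(n) for each k (where p̲ ≥ 0 and p(n) ≥ p̲ are given constants), then |G^p_{l,k}(ω)| ≤ C(k,l)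 |g(ω)|^{p − (k/n)p(n) + (k/n)p̲} for all ω, with C(k,l) = binom(k−1, l−1) c₄^l. -/
/-!
Bound each summand of `G^p_{l,k}` by `l! / ∏ j_i! · c₄ ^ l · |g| ^ (p - l + ∑ t_i j_i)`.
The hypothesis on `p_k` says `t_i ≥ 1 - (i / n) (p(n) - p̲)`, so under `∑ j_i = l` and
`∑ i j_i = k` the exponent is at least `p - (k / n) (p(n) - p̲)`, and `|g| ≤ 1` lets us pass to
that smaller exponent. The weights `l! / ∏ j_i!` add up to the coefficient of `X ^ k` in
`(X + ⋯ + X ^ k) ^ l`, which is the number `C(k - 1, l - 1)` of compositions of `k` into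
`l` parts.
-/

open Finset PowerSeries
open scoped Nat

theorem PowerSeries.coeff_sum_X_pow_pow {R ι : Type*} [CommSemiring R] [DecidableEq ι]
    (s : Finset ι) (e : ι → ℕ) (l k : ℕ) :
    coeff k ((∑ i ∈ s, X ^ e i : R⟦X⟧) ^ l) =
      ∑ j ∈ (s.piAntidiag l).filter (fun j => ∑ i ∈ s, e i * j i = k),
        (Nat.multinomial s j : R) := by
  simp only [sum_pow_eq_sum_piAntidiag, map_sum, ← pow_mul, prod_pow_eq_pow_sum, sum_filter,
    ← map_natCast (C (R := R)), coeff_C_mul_X_pow, mul_comm (e _)]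
  refine sum_congr rfl fun j _ => ?_
  simp [eq_comm]

theorem PowerSeries.coeff_geom_sum_pow {R : Type*} [CommRing R] {m l r : ℕ} (hl : 0 < l)
    (hr : r < m) :
    coeff r ((∑ i ∈ range m, X ^ i : R⟦X⟧) ^ l) = Nat.choose (l - 1 + r) (l - 1) := by
  have hdvd : (X : R⟦X⟧) ^ m ∣ mk 1 - ∑ i ∈ range m, X ^ i := by
    rw [X_pow_dvd_iff]
    intro i hi
    simp [coeff_X_pow, hi]
  have hcoeff := X_pow_dvd_iff.mp (hdvd.trans (sub_dvd_pow_sub_pow _ _ l)) r hr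
  rw [map_sub, sub_eq_zero] at hcoeff
  rw [← hcoeff, ← Nat.sub_one_add_one_eq_of_pos hl, mk_one_pow_eq_mk_choose_add, coeff_mk,
    Nat.add_sub_cancel]

theorem Nat.cast_multinomial {K α : Type*} [Field K] [CharZero K] (s : Finset α)
    (f : α → ℕ) :
    (Nat.multinomial s f : K) = (∑ i ∈ s, f i)! / ∏ i ∈ s, ((f i)! : K) := by
  rw [eq_div_iff (prod_ne_zero_iff.mpr fun i _ => mod_cast (f i).factorial_ne_zero),
    mul_comm]
  exact_mod_cast Nat.multinomial_spec s f

-- `j i` is the multiplicity of the part `i + 1` in a partition of `k` into `l` parts.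
def partitionMultiplicities (k l : ℕ) : Finset (Fin k → ℕ) :=
  (Fintype.piFinset fun _ : Fin k => range (k + 1)).filter
    (fun j => (∑ i, j i) = l ∧ (∑ i : Fin k, (i.1 + 1) * j i) = k)

-- The ordinary partial Bell polynomial: the coefficient of `X ^ k` in `(∑ m, y m * X ^ m) ^ l`.
noncomputable def ordinaryPartialBell (k l : ℕ) (y : ℕ → ℝ) : ℝ :=
  ∑ j ∈ partitionMultiplicities k l,
    ((l ! : ℝ) / ∏ i, ((j i)! : ℝ)) * ∏ i : Fin k, y (i.1 + 1) ^ j i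

theorem partitionMultiplicities_eq_filter_piAntidiag (k l : ℕ) :
    partitionMultiplicities k l =
      (univ.piAntidiag l).filter (fun j => ∑ i : Fin k, (i.1 + 1) * j i = k) := by
  ext j
  simp only [partitionMultiplicities, mem_filter, Fintype.mem_piFinset, mem_range,
    mem_piAntidiag, mem_univ, imp_true_iff, and_true]
  refine ⟨fun ⟨_, hl, hk⟩ => ⟨hl, hk⟩, fun ⟨hl, hk⟩ => ⟨fun i => ?_, hl, hk⟩⟩
  calc j i ≤ (i.1 + 1) * j i := Nat.le_mul_of_pos_left _ i.1.succ_pos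
    _ ≤ ∑ i, (i.1 + 1) * j i := single_le_sum (f := fun i : Fin k => (i.1 + 1) * j i)
        (fun _ _ => Nat.zero_le _) (mem_univ i)
    _ = k := hk
    _ < k + 1 := k.lt_succ_self

theorem partitionMultiplicities_zero_right {k : ℕ} (hk : k ≠ 0) :
    partitionMultiplicities k 0 = ∅ := by
  rw [partitionMultiplicities_eq_filter_piAntidiag, filter_eq_empty_iff]
  intro j hj
  simp_all [eq_comm]

theorem sum_multinomial_partitionMultiplicities {k l : ℕ} (hl : 1 ≤ l) (hlk : l ≤ k) :
    ∑ j ∈ partitionMultiplicities k l, Nat.multinomial univ j = (k - 1).choose (l - 1) := by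
  have hshift : (∑ i : Fin k, X ^ (i.1 + 1) : ℤ⟦X⟧) = X * ∑ i ∈ range k, X ^ i := by
    simp only [mul_sum, ← Fin.sum_univ_eq_sum_range, pow_succ']
  have h := coeff_sum_X_pow_pow (R := ℤ) univ (fun i : Fin k => i.1 + 1) l k
  rw [hshift, mul_pow, coeff_X_pow_mul', if_pos hlk, coeff_geom_sum_pow hl (by omega),
    ← partitionMultiplicities_eq_filter_piAntidiag, show l - 1 + (k - l) = k - 1 by omega] at h
  exact_mod_cast h.symm

theorem abs_prod_pow_le_mul_rpow {ι : Type*} (s : Finset ι) {f t : ι → ℝ} {c a : ℝ}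
    (ha : 0 < a) (hf : ∀ i ∈ s, |f i| ≤ c * a ^ t i) (j : ι → ℕ) :
    |∏ i ∈ s, f i ^ j i| ≤ c ^ (∑ i ∈ s, j i) * a ^ (∑ i ∈ s, t i * j i) := by
  calc |∏ i ∈ s, f i ^ j i| = ∏ i ∈ s, |f i| ^ j i := by simp only [abs_prod, abs_pow]
    _ ≤ ∏ i ∈ s, (c * a ^ t i) ^ j i :=
      prod_le_prod (fun _ _ => by positivity) fun i hi =>
        pow_le_pow_left₀ (abs_nonneg _) (hf i hi) _
    _ = c ^ (∑ i ∈ s, j i) * a ^ (∑ i ∈ s, t i * j i) := by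
      rw [Real.rpow_sum_of_pos ha, ← prod_pow_eq_pow_sum, ← prod_mul_distrib]
      refine prod_congr rfl fun i _ => ?_
      rw [mul_pow, Real.rpow_mul_natCast ha.le]

theorem sub_mul_le_sum_mul_of_mem_partitionMultiplicities {k l : ℕ} {t : ℕ → ℝ} {δ : ℝ}
    (ht : ∀ m, 1 ≤ m → m ≤ k → 1 - m * δ ≤ t m) {j : Fin k → ℕ}
    (hj : j ∈ partitionMultiplicities k l) :
    l - k * δ ≤ ∑ i : Fin k, t (i.1 + 1) * j i := by
  obtain ⟨-, hl, hk⟩ := mem_filter.mp hj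
  have hl' : (∑ i : Fin k, (j i : ℝ)) = l := mod_cast hl
  have hk' : (∑ i : Fin k, ((i.1 : ℝ) + 1) * j i) = k := mod_cast hk
  calc (l : ℝ) - k * δ = ∑ i : Fin k, (1 - ((i.1 : ℝ) + 1) * δ) * j i := by
        simp only [sub_mul, one_mul, sum_sub_distrib, mul_right_comm _ δ, ← sum_mul, hl', hk']
    _ ≤ ∑ i : Fin k, t (i.1 + 1) * j i := by
      refine sum_le_sum fun i _ => mul_le_mul_of_nonneg_right ?_ (Nat.cast_nonneg _)
      exact_mod_cast ht (i.1 + 1) i.1.succ_pos i.2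

theorem abs_ordinaryPartialBell_le {k l : ℕ} (hl : 1 ≤ l) (hlk : l ≤ k) {y t : ℕ → ℝ}
    {a c δ : ℝ} (ha₀ : 0 < a) (ha₁ : a ≤ 1) (hc : 0 ≤ c)
    (hy : ∀ m, 1 ≤ m → m ≤ k → |y m| ≤ c * a ^ t m)
    (ht : ∀ m, 1 ≤ m → m ≤ k → 1 - m * δ ≤ t m) :
    |ordinaryPartialBell k l y| ≤ (k - 1).choose (l - 1) * c ^ l * a ^ (l - k * δ) := by
  have hterm : ∀ j ∈ partitionMultiplicities k l, |∏ i : Fin k, y (i.1 + 1) ^ j i| ≤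
      c ^ l * a ^ (l - k * δ) := by
    intro j hj
    have hl' : ∑ i, j i = l := (mem_filter.mp hj).2.1
    calc |∏ i : Fin k, y (i.1 + 1) ^ j i|
        ≤ c ^ l * a ^ (∑ i : Fin k, t (i.1 + 1) * j i) := hl' ▸
          abs_prod_pow_le_mul_rpow univ ha₀ (fun i _ => hy _ i.1.succ_pos i.2) j
      _ ≤ c ^ l * a ^ (l - k * δ) := mul_le_mul_of_nonneg_left
          (Real.rpow_le_rpow_of_exponent_ge ha₀ ha₁
            (sub_mul_le_sum_mul_of_mem_partitionMultiplicities ht hj)) (pow_nonneg hc l)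
  calc |ordinaryPartialBell k l y|
      ≤ ∑ j ∈ partitionMultiplicities k l,
          (Nat.multinomial univ j : ℝ) * (c ^ l * a ^ (l - k * δ)) := by
        refine (abs_sum_le_sum_abs _ _).trans (sum_le_sum fun j hj => ?_)
        have hcoef : (l ! : ℝ) / ∏ i, ((j i)! : ℝ) = Nat.multinomial univ j := by
          rw [Nat.cast_multinomial, (mem_filter.mp hj).2.1]
        rw [abs_mul, hcoef, Nat.abs_cast]
        exact mul_le_mul_of_nonneg_left (hterm j hj) (Nat.cast_nonneg _)
    _ = (k - 1).choose (l - 1) * c ^ l * a ^ (l - k * δ) := by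
      rw [← sum_mul, ← Nat.cast_sum, sum_multinomial_partitionMultiplicities hl hlk, mul_assoc]

theorem one_sub_mul_div_le_of_add_div_mul_le {m n pl pn τ : ℝ} (hm : 0 < m) (hmn : m ≤ n)
    (h : pl + n / m * (1 - τ) ≤ pn) : 1 - m * ((pn - pl) / n) ≤ τ := by
  rw [div_mul_eq_mul_div, ← le_sub_iff_add_le', div_le_iff₀ hm] at h
  rw [mul_div_assoc', sub_le_comm, le_div_iff₀ (hm.trans_le hmn)]
  linarith

theorem G_lk_bound_general
    {X : Type*} (g : X → ℝ) (gk : ℕ → X → ℝ) (n : ℕ)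
    (hg : ∀ ω, 0 < |g ω| ∧ |g ω| ≤ 1)
    (c₄ : ℝ) (hc₄ : 0 < c₄) (t : ℕ → ℝ)
    (hgk : ∀ k, 1 ≤ k → k ≤ n → ∀ ω, |gk k ω| ≤ c₄ * |g ω| ^ t k)
    (pl pn : ℝ)
    (hpk : ∀ k, 1 ≤ k → k ≤ n → pl + ((n : ℝ) / k) * (1 - t k) ≤ pn)
    (p : ℝ) :
    ∀ l k : ℕ, l ≤ k → k ≤ n → ∀ ω,
      |(if k = 0 then |g ω| ^ p else
          (|g ω| ^ p / g ω ^ l) *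
            ∑ j ∈ (Fintype.piFinset fun _ : Fin k => Finset.range (k + 1)).filter
                (fun j : Fin k → ℕ => (∑ i : Fin k, j i) = l ∧ (∑ i : Fin k, (i.1 + 1) * j i) = k),
              ((Nat.factorial l : ℝ) / ∏ i : Fin k, (Nat.factorial (j i) : ℝ)) *
                ∏ i : Fin k, (gk (i.1 + 1) ω) ^ j i)| ≤
        (Nat.choose (k - 1) (l - 1) : ℝ) * c₄ ^ l *
          |g ω| ^ (p - ((k : ℝ) / n) * pn + ((k : ℝ) / n) * pl) := by
  intro l k hlk hkn ω
  obtain ⟨ha₀, ha₁⟩ := hg ω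
  rcases Nat.eq_zero_or_pos k with rfl | hk
  · obtain rfl := Nat.le_zero.mp hlk
    simp [abs_of_nonneg (Real.rpow_nonneg (abs_nonneg _) _)]
  rw [if_neg hk.ne']
  change |_ * ordinaryPartialBell k l (fun m => gk m ω)| ≤ _
  rcases Nat.eq_zero_or_pos l with rfl | hl
  · rw [ordinaryPartialBell, partitionMultiplicities_zero_right hk.ne', sum_empty, mul_zero,
      abs_zero]
    positivity
  have hB := abs_ordinaryPartialBell_le hl hlk ha₀ ha₁ hc₄.le
    (fun m hm hmk => hgk m hm (hmk.trans hkn) ω)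
    (fun m hm hmk => one_sub_mul_div_le_of_add_div_mul_le (mod_cast hm) (mod_cast hmk.trans hkn)
      (hpk m hm (hmk.trans hkn)))
  have hexp : |g ω| ^ p / |g ω| ^ l * |g ω| ^ ((l : ℝ) - k * ((pn - pl) / n)) =
      |g ω| ^ (p - ((k : ℝ) / n) * pn + ((k : ℝ) / n) * pl) := by
    rw [← Real.rpow_natCast, ← Real.rpow_sub ha₀, ← Real.rpow_add ha₀]
    ring_nf
  rw [abs_mul, abs_div, abs_pow, abs_of_nonneg (by positivity), ← hexp]
  calc _ ≤ |g ω| ^ p / |g ω| ^ l * ((k - 1).choose (l - 1) * c₄ ^ l *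
        |g ω| ^ ((l : ℝ) - k * ((pn - pl) / n))) := by gcongr
    _ = _ := by ring

/-- pointwise bound on the functions `G^p_{l,k}` (Lemma 3.3). -/
theorem G_lk_bound
    {X : Type*} (g : X → ℝ) (gk : ℕ → X → ℝ) (n : ℕ) (hn : 1 ≤ n)
    (hg : ∀ ω, 0 < |g ω| ∧ |g ω| ≤ 1)
    (c₄ : ℝ) (hc₄ : 0 < c₄) (t : ℕ → ℝ)
    (ht : ∀ k, 1 ≤ k → k ≤ n → t k ∈ Set.Ioc (0 : ℝ) 1)
    (hgk : ∀ k, 1 ≤ k → k ≤ n → ∀ ω, |gk k ω| ≤ c₄ * |g ω| ^ t k)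
    (pl pn : ℝ) (hpl : 0 ≤ pl) (hplpn : pl ≤ pn)
    (hpk : ∀ k, 1 ≤ k → k ≤ n → pl + ((n : ℝ) / k) * (1 - t k) ≤ pn)
    (p : ℝ) (hp : 0 < p) :
    ∀ l k : ℕ, l ≤ k → k ≤ n → ∀ ω,
      |(if k = 0 then |g ω| ^ p else
          (|g ω| ^ p / g ω ^ l) *
            ∑ j ∈ (Fintype.piFinset fun _ : Fin k => Finset.range (k + 1)).filter
                (fun j : Fin k → ℕ => (∑ i : Fin k, j i) = l ∧ (∑ i : Fin k, (i.1 + 1) * j i) = k),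
              ((Nat.factorial l : ℝ) / ∏ i : Fin k, (Nat.factorial (j i) : ℝ)) *
                ∏ i : Fin k, (gk (i.1 + 1) ω) ^ j i)| ≤
        (Nat.choose (k - 1) (l - 1) : ℝ) * c₄ ^ l *
          |g ω| ^ (p - ((k : ℝ) / n) * pn + ((k : ℝ) / n) * pl) :=
  G_lk_bound_general g gk n hg c₄ hc₄ t hgk pl pn hpk p
end

section
/- Under the hypotheses that the expansion |g(ε,·)|^p = Σ_{k=0}^n g_{k,p} ε^k + g̃_{n,p}(ε,·)ε^n holds with |g_{k,p}(ω)| ≤ c₁|g(ω)|^{p−(k/n)p(n)+(k/n)p̲} and the transfer operator L₀ of (p̲+η)log|g| + log ψ is bounded (‖L₀ 1‖_∞ < ∞ for some η > 0 with p(n)+η < p), the operators (L_{k,p} f)(ω) = Σ_{e : t(e)=i(ω₀)} ζ_{k,p}(e·ω) f(e·ω) with ζ_{k,p} = Σ_{i=0}^k g_{i,p} ψ_{k−i} satisfy ‖L_{k,p} f‖_∞ ≤ C ‖L₀ 1‖_∞ ‖f‖_∞, i.e. are bounded on the space of bounded continuous functions, uniformly for p in a compact subset of (p(n), ∞). -/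
/-- The one-sided shift space of a countable directed graph with transition
relation `A` (edge `e` may be followed by edge `e'` iff `A e e'`). -/
abbrev ShiftSpace {E : Type*} (A : E → E → Prop) : Type _ :=
  {ω : ℕ → E // ∀ i, A (ω i) (ω (i + 1))}

/-- Concatenation `e · ω` of an admissible symbol `e` with `ω`. -/
def ShiftSpace.cons {E : Type*} {A : E → E → Prop} (e : E) (ω : ShiftSpace A)
    (h : A e (ω.1 0)) : ShiftSpace A :=
  ⟨fun i => Nat.casesOn i e fun j => ω.1 j, by
    intro i
    cases i with
    | zero => exact h
    | succ j => exact ω.2 j⟩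

/-!
Each term of `ζ_{k,p} = ∑ g_{i,p} ψ_{k-i}` is bounded by `c₁ cψ |g|^e ψ` with exponent
`e = p - (i/n)(p(n) - p̲)`. Since `i/n ≤ 1` and `p > p(n) + η`, we have `e ≥ p̲ + η`,
and `|g| < 1` turns this into `|ζ_{k,p}| ≤ (n+1) c₁ cψ |g|^(p̲+η) ψ`. The operator series is thus
dominated, uniformly in `p` and `k`, by the transfer operator of `(p̲+η) log|g| + log ψ`
applied to `‖f‖_∞`.
-/

theorem add_le_sub_mul_add_mul {pl pn η p t : ℝ} (hplpn : pl ≤ pn) (hp : pn + η < p)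
    (ht : t ≤ 1) : pl + η ≤ p - t * pn + t * pl := by
  have := mul_le_mul_of_nonneg_right ht (sub_nonneg.2 hplpn)
  linarith

theorem abs_sum_range_mul_sub_le {a b : ℕ → ℝ} {k : ℕ} {M N : ℝ}
    (ha : ∀ i ≤ k, |a i| ≤ M) (hb : ∀ i ≤ k, |b i| ≤ N) :
    |∑ i ∈ Finset.range (k + 1), a i * b (k - i)| ≤ (k + 1) * (M * N) := by
  have hterm : ∀ i ∈ Finset.range (k + 1), |a i * b (k - i)| ≤ M * N := fun i hi => by
    have hik := Nat.lt_succ_iff.1 (Finset.mem_range.1 hi)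
    rw [abs_mul]
    exact mul_le_mul (ha i hik) (hb _ (k.sub_le i)) (abs_nonneg _) ((abs_nonneg _).trans (ha i hik))
  calc |∑ i ∈ Finset.range (k + 1), a i * b (k - i)|
      ≤ ∑ i ∈ Finset.range (k + 1), |a i * b (k - i)| := Finset.abs_sum_le_sum_abs _ _
    _ ≤ (Finset.range (k + 1)).card • (M * N) := Finset.sum_le_card_nsmul _ _ _ hterm
    _ = (k + 1) * (M * N) := by rw [Finset.card_range, nsmul_eq_mul]; push_cast; ring

theorem abs_tsum_mul_le_of_abs_le_mul {ι : Type*} {w f u : ι → ℝ} {c B F : ℝ}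
    (hu : Summable u) (hw : ∀ i, |w i| ≤ c * u i) (hf : ∀ i, |f i| ≤ F)
    (hB : ∑' i, u i ≤ B) (hc : 0 ≤ c) (hF : 0 ≤ F) :
    |∑' i, w i * f i| ≤ c * B * F := by
  have hbound : ∀ i, ‖w i * f i‖ ≤ c * F * u i := fun i => by
    rw [Real.norm_eq_abs, abs_mul, mul_right_comm]
    exact mul_le_mul (hw i) (hf i) (abs_nonneg _) ((abs_nonneg _).trans (hw i))
  calc |∑' i, w i * f i| ≤ c * F * ∑' i, u i :=
        tsum_of_norm_bounded (hu.hasSum.mul_left _) hbound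
    _ ≤ c * F * B := by gcongr
    _ = c * B * F := by ring

theorem coefficient_operators_bounded_general
    {E : Type*} [Countable E] (A : E → E → Prop)
    (g ψ : ShiftSpace A → ℝ) (n : ℕ)
    (pl pn η : ℝ) (hplpn : pl ≤ pn)
    (I : Set ℝ) (hI : ∀ p ∈ I, pn + η < p)
    (c₁ cψ : ℝ) (hc₁ : 0 < c₁) (hcψ : 0 < cψ)
    (gkp : ℝ → ℕ → ShiftSpace A → ℝ) (ψk : ℕ → ShiftSpace A → ℝ)
    (hg : ∀ ω, 0 < |g ω| ∧ |g ω| < 1) (hψ : ∀ ω, 0 < ψ ω)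
    (hgkp : ∀ p ∈ I, ∀ k ≤ n, ∀ ω,
      |gkp p k ω| ≤ c₁ * |g ω| ^ (p - ((k : ℝ) / n) * pn + ((k : ℝ) / n) * pl))
    (hψk : ∀ k ≤ n, ∀ ω, |ψk k ω| ≤ cψ * ψ ω)
    (B : ℝ)
    (hsum : ∀ ω : ShiftSpace A,
      Summable fun e : {e : E // A e (ω.1 0)} =>
        |g (ShiftSpace.cons e.1 ω e.2)| ^ (pl + η) * ψ (ShiftSpace.cons e.1 ω e.2))
    (hB : ∀ ω : ShiftSpace A,
      (∑' e : {e : E // A e (ω.1 0)},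
        |g (ShiftSpace.cons e.1 ω e.2)| ^ (pl + η) * ψ (ShiftSpace.cons e.1 ω e.2)) ≤ B) :
    ∃ C > 0, ∀ p ∈ I, ∀ k, 1 ≤ k → k ≤ n →
      ∀ (f : ShiftSpace A → ℝ) (F : ℝ), (∀ ω, |f ω| ≤ F) →
        ∀ ω : ShiftSpace A,
          |∑' e : {e : E // A e (ω.1 0)},
              (∑ i ∈ Finset.range (k + 1),
                gkp p i (ShiftSpace.cons e.1 ω e.2) *
                  ψk (k - i) (ShiftSpace.cons e.1 ω e.2)) *
                f (ShiftSpace.cons e.1 ω e.2)| ≤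
            C * B * F := by
  refine ⟨(n + 1) * (c₁ * cψ), by positivity, fun p hp k _ hkn f F hf ω => ?_⟩
  refine abs_tsum_mul_le_of_abs_le_mul (hsum ω) (fun e => ?_) (fun e => hf _) (hB ω)
    (by positivity) ((abs_nonneg _).trans (hf ω))
  set x := ShiftSpace.cons e.1 ω e.2
  have hgkp_le : ∀ i ≤ k, |gkp p i x| ≤ c₁ * |g x| ^ (pl + η) := fun i hi => by
    have hin := hi.trans hkn
    have hexp := add_le_sub_mul_add_mul hplpn (hI p hp)
      (div_le_one_of_le₀ (Nat.cast_le.2 hin) (Nat.cast_nonneg n))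
    exact (hgkp p hp i hin x).trans <| mul_le_mul_of_nonneg_left
      (Real.rpow_le_rpow_of_exponent_ge (hg x).1 (hg x).2.le hexp) hc₁.le
  have hk : (k : ℝ) + 1 ≤ n + 1 := by exact_mod_cast Nat.succ_le_succ hkn
  have hψx := (hψ x).le
  calc |∑ i ∈ Finset.range (k + 1), gkp p i x * ψk (k - i) x|
      ≤ (k + 1) * ((c₁ * |g x| ^ (pl + η)) * (cψ * ψ x)) :=
        abs_sum_range_mul_sub_le hgkp_le fun i hi => hψk i (hi.trans hkn) x
    _ ≤ (n + 1) * ((c₁ * |g x| ^ (pl + η)) * (cψ * ψ x)) := by gcongr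
    _ = (n + 1) * (c₁ * cψ) * (|g x| ^ (pl + η) * ψ x) := by ring

/-- uniform boundedness of the coefficient operators `L_{k,p}`
of the expansion of the perturbed Ruelle operator, on bounded continuous
functions, uniformly for `p` in a compact subset of `(p(n), ∞)`. -/
theorem coefficient_operators_bounded
    {E : Type*} [Countable E] (A : E → E → Prop)
    (g ψ : ShiftSpace A → ℝ) (n : ℕ) (hn : 1 ≤ n)
    (pl pn η : ℝ) (hpl : 0 ≤ pl) (hplpn : pl ≤ pn) (hη : 0 < η)
    (I : Set ℝ) (hIc : IsCompact I) (hI : ∀ p ∈ I, pn + η < p)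
    (c₁ cψ : ℝ) (hc₁ : 0 < c₁) (hcψ : 0 < cψ)
    (gkp : ℝ → ℕ → ShiftSpace A → ℝ) (ψk : ℕ → ShiftSpace A → ℝ)
    (hg : ∀ ω, 0 < |g ω| ∧ |g ω| < 1) (hψ : ∀ ω, 0 < ψ ω) (hψ0 : ψk 0 = ψ)
    (hgkp : ∀ p ∈ I, ∀ k ≤ n, ∀ ω,
      |gkp p k ω| ≤ c₁ * |g ω| ^ (p - ((k : ℝ) / n) * pn + ((k : ℝ) / n) * pl))
    (hψk : ∀ k ≤ n, ∀ ω, |ψk k ω| ≤ cψ * ψ ω)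
    (B : ℝ)
    (hsum : ∀ ω : ShiftSpace A,
      Summable fun e : {e : E // A e (ω.1 0)} =>
        |g (ShiftSpace.cons e.1 ω e.2)| ^ (pl + η) * ψ (ShiftSpace.cons e.1 ω e.2))
    (hB : ∀ ω : ShiftSpace A,
      (∑' e : {e : E // A e (ω.1 0)},
        |g (ShiftSpace.cons e.1 ω e.2)| ^ (pl + η) * ψ (ShiftSpace.cons e.1 ω e.2)) ≤ B) :
    ∃ C > 0, ∀ p ∈ I, ∀ k, 1 ≤ k → k ≤ n →
      ∀ (f : ShiftSpace A → ℝ) (F : ℝ), (∀ ω, |f ω| ≤ F) →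
        ∀ ω : ShiftSpace A,
          |∑' e : {e : E // A e (ω.1 0)},
              (∑ i ∈ Finset.range (k + 1),
                gkp p i (ShiftSpace.cons e.1 ω e.2) *
                  ψk (k - i) (ShiftSpace.cons e.1 ω e.2)) *
                f (ShiftSpace.cons e.1 ω e.2)| ≤
            C * B * F :=
  coefficient_operators_bounded_general A g ψ n pl pn η hplpn I hI c₁ cψ hc₁ hcψ gkp ψk hg hψ hgkp
    hψk B hsum hB
end

section
/- Let (X₀,‖·‖₀) be a normed space and (X₁,‖·‖₁) ⊂ X₀ a Banach space with ‖f‖₀ ≤ ‖f‖₁. Let L ∈ L(X₀) ∩ L(X₁), L(ε,·) ∈ L(X₀), with eigendata L*ν = λν, L(ε,·)*ν(ε,·) = λ(ε)ν(ε,·), and assume: (L.1) ∃ h ∈ X₁ with Lh = λh, ν(h) = 1; (L.3) limsup_{ε→0} ‖ν(ε,·)‖₀*/ν(ε,h) < ∞; (L.4) with n = 0, ‖L(ε,·)f − Lf‖₀ → 0 for each f ∈ X₁. Then λ(ε) → λ as ε → 0. [First-order identity: (λ(ε) − λ)ν(ε,h) = ν(ε, (L(ε,·) − L)h).] -/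
/-- first-order convergence of the perturbed eigenvalue `λ(ε) → λ`
under conditions (L.1), (L.3) and (L.4) with `n = 0`, together with the
first-order identity `(λ(ε) − λ) ν(ε, h) = ν(ε, (L(ε,·) − L) h)`. -/
theorem perturbed_eigenvalue_convergence
    {X₀ X₁ : Type*} [NormedAddCommGroup X₀] [NormedSpace ℝ X₀]
    [NormedAddCommGroup X₁] [NormedSpace ℝ X₁] [CompleteSpace X₁]
    (j : X₁ →ₗ[ℝ] X₀) (hj : Function.Injective j) (hjn : ∀ f : X₁, ‖j f‖ ≤ ‖f‖)
    (L : X₀ →L[ℝ] X₀) (Lε : ℝ → X₀ →L[ℝ] X₀)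
    (lam : ℝ) (Lam : ℝ → ℝ) (ν : X₀ →L[ℝ] ℝ) (Nu : ℝ → (X₀ →L[ℝ] ℝ))
    (hν : ∀ f : X₀, ν (L f) = lam * ν f)
    (hNu : ∀ ε : ℝ, 0 < ε → ∀ f : X₀, Nu ε (Lε ε f) = Lam ε * Nu ε f)
    (h : X₁) (hLh : L (j h) = lam • (j h)) (hνh : ν (j h) = 1)
    (K ε₁ : ℝ) (hε₁ : 0 < ε₁)
    (hL3 : ∀ ε : ℝ, 0 < ε → ε < ε₁ → Nu ε (j h) ≠ 0 ∧ ‖Nu ε‖ ≤ K * |Nu ε (j h)|)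
    (hL4 : ∀ f : X₁, Filter.Tendsto (fun ε => ‖Lε ε (j f) - L (j f)‖)
      (nhdsWithin 0 (Set.Ioi 0)) (nhds 0)) :
    Filter.Tendsto Lam (nhdsWithin 0 (Set.Ioi 0)) (nhds lam) ∧
      ∀ ε : ℝ, 0 < ε →
        (Lam ε - lam) * Nu ε (j h) = Nu ε (Lε ε (j h) - L (j h)) := by
  have hid : ∀ ε : ℝ, 0 < ε →
      (Lam ε - lam) * Nu ε (j h) = Nu ε (Lε ε (j h) - L (j h)) := by
    intro ε hε
    have h1 : Nu ε (Lε ε (j h)) = Lam ε * Nu ε (j h) := hNu ε hε _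
    have h2 : Nu ε (L (j h)) = lam * Nu ε (j h) := by
      rw [hLh]; simp [mul_comm]
    rw [map_sub, h1, h2]; ring
  refine ⟨?_, hid⟩
  have hbound : ∀ᶠ ε in nhdsWithin (0:ℝ) (Set.Ioi 0),
      ‖Lam ε - lam‖ ≤ K * ‖Lε ε (j h) - L (j h)‖ := by
    have hmem : ∀ᶠ ε in nhdsWithin (0:ℝ) (Set.Ioi 0), ε ∈ Set.Ioo 0 ε₁ := by
      have : Set.Ioo (0:ℝ) ε₁ ∈ nhdsWithin (0:ℝ) (Set.Ioi 0) :=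
        Ioo_mem_nhdsGT_of_mem (by constructor <;> simp [hε₁, le_refl])
      exact this
    filter_upwards [hmem] with ε hε
    obtain ⟨hne, hK⟩ := hL3 ε hε.1 hε.2
    have hpos : 0 < |Nu ε (j h)| := abs_pos.mpr hne
    have key : |(Lam ε - lam)| * |Nu ε (j h)| ≤ (K * |Nu ε (j h)|) * ‖Lε ε (j h) - L (j h)‖ := by
      rw [← abs_mul, hid ε hε.1]
      calc |Nu ε (Lε ε (j h) - L (j h))| ≤ ‖Nu ε‖ * ‖Lε ε (j h) - L (j h)‖ :=
            (Nu ε).le_opNorm _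
        _ ≤ (K * |Nu ε (j h)|) * ‖Lε ε (j h) - L (j h)‖ :=
            mul_le_mul_of_nonneg_right hK (norm_nonneg _)
    have := (div_le_div_iff_of_pos_right hpos).mpr key
    rw [Real.norm_eq_abs]
    calc |Lam ε - lam| = |Lam ε - lam| * |Nu ε (j h)| / |Nu ε (j h)| := by
          field_simp
      _ ≤ (K * |Nu ε (j h)|) * ‖Lε ε (j h) - L (j h)‖ / |Nu ε (j h)| := this
      _ = K * ‖Lε ε (j h) - L (j h)‖ := by field_simp
  have htend : Filter.Tendsto (fun ε => K * ‖Lε ε (j h) - L (j h)‖)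
      (nhdsWithin 0 (Set.Ioi 0)) (nhds 0) := by
    have := (hL4 h).const_mul K
    simpa using this
  have hsub : Filter.Tendsto (fun ε => Lam ε - lam) (nhdsWithin 0 (Set.Ioi 0)) (nhds 0) :=
    squeeze_zero_norm' hbound htend
  have : Filter.Tendsto (fun ε => (Lam ε - lam) + lam) (nhdsWithin 0 (Set.Ioi 0)) (nhds (0 + lam)) :=
    hsub.add tendsto_const_nhds
  simpa using this
end
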